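/- Let γ ∈ [0,1) and let (c_t)_{t≥0} and (ρ_t)_{t≥0} be sequences of nonnegative reals. Set ρ_{-1} := 1, C_{-1} := C_{-2} := 1 and C_t := ∏_{u=0}^{t} c_u for t ≥ 0, and define α_0 := 1 − ρ_0 and α_t := ρ_{t-1} − c_{t-1}·ρ_t for t ≥ 1. If the series ∑_{t=0}^∞ γ^t C_{t-1} ρ_t converges, then the series ∑_{t=0}^∞ γ^t C_{t-2} α_t converges and ∑_{t=0}^∞ γ^t C_{t-2} α_t = 1 + (γ − 1)·∑_{t=0}^∞ γ^t C_{t-1} ρ_t. -/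

import Mathlib

/-- The coefficients `α_t`: `α_0 = 1 - ρ_0` and `α_t = ρ_{t-1} - c_{t-1} * ρ_t` for
`t ≥ 1`. -/
def vtraceAlpha (c ρ : ℕ → ℝ) : ℕ → ℝ
  | 0 => 1 - ρ 0
  | (t + 1) => ρ t - c t * ρ (t + 1)

/-! The `t`-th term of the `α`-series equals `g_t - a_t`, where `a_t = γ^t C_{t-1} ρ_t` and
`g_0 = 1`, `g_{t+1} = γ a_t`; summing, the series is `1 + γ ∑ a - ∑ a`. -/

theorem hasSum_of_eq_mul_sub_succ {R : Type*} [Ring R] [TopologicalSpace R]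
    [IsTopologicalRing R] {a f : ℕ → R} {s : R} (ha : HasSum a s) (x γ : R)
    (h0 : f 0 = x - a 0) (hsucc : ∀ t, f (t + 1) = γ * a t - a (t + 1)) :
    HasSum f (x + (γ - 1) * s) := by
  rw [← hasSum_nat_add_iff' 1, Finset.sum_range_one, h0]
  have htail : HasSum (fun t => f (t + 1)) (γ * s - (s - a 0)) := by
    simp only [hsucc]
    have hshift : HasSum (fun t => a (t + 1)) (s - a 0) := by
      simpa using (hasSum_nat_add_iff' 1).mpr ha
    exact (ha.mul_left γ).sub hshift
  rwa [show x + (γ - 1) * s - (x - a 0) = γ * s - (s - a 0) by noncomm_ring]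

theorem vtraceAlpha_term_succ (γ : ℝ) (c ρ : ℕ → ℝ) (t : ℕ) :
    γ ^ (t + 1) * (∏ u ∈ Finset.range (t + 1 - 1), c u) * vtraceAlpha c ρ (t + 1)
      = γ * (γ ^ t * (∏ u ∈ Finset.range t, c u) * ρ t)
        - γ ^ (t + 1) * (∏ u ∈ Finset.range (t + 1), c u) * ρ (t + 1) := by
  simp only [vtraceAlpha, Nat.add_sub_cancel, Finset.prod_range_succ]
  ring

/-- `C_{t-1}` and `C_{t-2}` are `∏ u ∈ range t` and `∏ u ∈ range (t - 1)`; truncated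
ℕ-subtraction yields the conventions `C_{-1} = C_{-2} = 1`. -/
theorem vtrace_alpha_series_identity
    (γ : ℝ)
    (c ρ : ℕ → ℝ)
    (hsum : Summable fun t : ℕ => γ ^ t * (∏ u ∈ Finset.range t, c u) * ρ t) :
    (Summable fun t : ℕ =>
        γ ^ t * (∏ u ∈ Finset.range (t - 1), c u) * vtraceAlpha c ρ t) ∧
    ∑' t : ℕ, γ ^ t * (∏ u ∈ Finset.range (t - 1), c u) * vtraceAlpha c ρ t
      = 1 + (γ - 1) * ∑' t : ℕ, γ ^ t * (∏ u ∈ Finset.range t, c u) * ρ t := by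
  have h := hasSum_of_eq_mul_sub_succ
    (f := fun t => γ ^ t * (∏ u ∈ Finset.range (t - 1), c u) * vtraceAlpha c ρ t)
    hsum.hasSum 1 γ (by simp [vtraceAlpha]) (vtraceAlpha_term_succ γ c ρ)
  exact ⟨h.summable, h.tsum_eq⟩
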